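/- For density operators ρ and σ on a finite-dimensional Hilbert space, the Fuchs–van de Graaf upper bound holds: ‖ρ − σ‖₁ ≤ 2√(1 − F(ρ,σ)²), where F is the fidelity. -/

import Mathlib

/-! Write `ρ = A Aᴴ` and `σ = B Bᴴ` with `A = √ρ` and `B = √σ V`, where the unitary `V` comes
from the polar decomposition of `√ρ √σ`, so that `Re tr (Aᴴ B) = F`. Since
`2 (ρ - σ) = (A - B)(A + B)ᴴ + (A + B)(A - B)ᴴ`, pairing with a unitary `W` that attains
`‖ρ - σ‖₁ = Re tr ((ρ - σ) W)` and applying Cauchy–Schwarz for the Hilbert–Schmidt inner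
product gives `‖ρ - σ‖₁ ≤ ‖A - B‖₂ ‖A + B‖₂ = √((2 - 2F)(2 + 2F))`. -/

open scoped ComplexOrder

/-- The square root of a positive semidefinite matrix, as defined in the older Mathlib
(`Matrix.PosSemidef.sqrt`, removed since). -/
noncomputable def Matrix.PosSemidef.sqrt {n 𝕜 : Type*} [Fintype n] [RCLike 𝕜] [DecidableEq n]
    {A : Matrix n n 𝕜} (hA : A.PosSemidef) : Matrix n n 𝕜 :=
  (hA.1.eigenvectorUnitary : Matrix n n 𝕜) *
    Matrix.diagonal ((↑) ∘ (fun x : ℝ => Real.sqrt x) ∘ hA.1.eigenvalues) *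
    (star hA.1.eigenvectorUnitary : Matrix n n 𝕜)

/-- The trace norm (Schatten 1-norm) of a complex matrix: the trace of `√(Aᴴ A)`. -/
noncomputable def traceNorm {n : Type*} [Fintype n] [DecidableEq n]
    (A : Matrix n n ℂ) : ℝ :=
  ((Matrix.posSemidef_conjTranspose_mul_self A).sqrt.trace).re

open Classical in
/-- Square root of a positive semidefinite matrix (junk value `0` otherwise). -/
noncomputable def matSqrt {n : Type*} [Fintype n] [DecidableEq n]
    (A : Matrix n n ℂ) : Matrix n n ℂ :=
  if h : A.PosSemidef then h.sqrt else 0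

/-- The fidelity `F(ρ,σ) = ‖√ρ √σ‖₁` between two density matrices. -/
noncomputable def fidelity {n : Type*} [Fintype n] [DecidableEq n]
    (ρ σ : Matrix n n ℂ) : ℝ :=
  traceNorm (matSqrt ρ * matSqrt σ)

section InnerProductSpace

variable {𝕜 E : Type*} [RCLike 𝕜] [NormedAddCommGroup E] [InnerProductSpace 𝕜 E]

open RCLike in
lemma norm_sub_mul_norm_add_of_norm_eq_one {x y : E} (hx : ‖x‖ = 1) (hy : ‖y‖ = 1) :
    ‖x - y‖ * ‖x + y‖ = 2 * √(1 - re (inner 𝕜 x y) ^ 2) := by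
  rw [← Real.sqrt_sq (by positivity : 0 ≤ ‖x - y‖ * ‖x + y‖), mul_pow,
    norm_sub_sq (𝕜 := 𝕜), norm_add_sq (𝕜 := 𝕜), hx, hy,
    show (2 : ℝ) = √(2 ^ 2) from (Real.sqrt_sq zero_le_two).symm,
    ← Real.sqrt_mul (by positivity)]
  ring_nf

end InnerProductSpace

namespace Matrix

variable {m n 𝕜 : Type*} [RCLike 𝕜]

section Sqrt

open scoped MatrixOrder

variable [Fintype n] [DecidableEq n]

lemma PosSemidef.sqrt_eq_cfcSqrt {A : Matrix n n 𝕜} (hA : A.PosSemidef) :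
    hA.sqrt = CFC.sqrt A := by
  rw [CFC.sqrt_eq_cfc, cfc_nnreal_eq_real _ A, hA.1.cfc_eq]
  have hf : (RCLike.ofReal ∘ (fun x : ℝ => ((NNReal.sqrt x.toNNReal : NNReal) : ℝ)) ∘
      hA.1.eigenvalues : n → 𝕜) =
        RCLike.ofReal ∘ (fun x : ℝ => Real.sqrt x) ∘ hA.1.eigenvalues := by
    funext i
    simp [hA.eigenvalues_nonneg i]
  simp only [IsHermitian.cfc, PosSemidef.sqrt, Unitary.conjStarAlgAut_apply, hf]

lemma PosSemidef.conjTranspose_sqrt {A : Matrix n n 𝕜} (hA : A.PosSemidef) :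
    hA.sqrtᴴ = hA.sqrt := by
  rw [hA.sqrt_eq_cfcSqrt]
  exact (nonneg_iff_posSemidef.mp (CFC.sqrt_nonneg A)).1

lemma PosSemidef.sqrt_mul_sqrt {A : Matrix n n 𝕜} (hA : A.PosSemidef) :
    hA.sqrt * hA.sqrt = A := by
  rw [hA.sqrt_eq_cfcSqrt]
  exact CFC.sqrt_mul_sqrt_self A hA.nonneg

end Sqrt

section HilbertSchmidt

def euclideanVec (X : Matrix m n 𝕜) : EuclideanSpace 𝕜 (n × m) := WithLp.toLp 2 X.vec

lemma euclideanVec_add (X Y : Matrix m n 𝕜) :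
    euclideanVec (X + Y) = euclideanVec X + euclideanVec Y := rfl

lemma euclideanVec_sub (X Y : Matrix m n 𝕜) :
    euclideanVec (X - Y) = euclideanVec X - euclideanVec Y := rfl

variable [Fintype m] [Fintype n]

lemma inner_euclideanVec (X Y : Matrix m n 𝕜) :
    inner 𝕜 (euclideanVec X) (euclideanVec Y) = (Xᴴ * Y).trace := by
  rw [euclideanVec, euclideanVec, EuclideanSpace.inner_toLp_toLp, dotProduct_comm,
    star_vec_dotProduct_vec]

lemma norm_euclideanVec_sq (X : Matrix m n 𝕜) :
    ‖euclideanVec X‖ ^ 2 = RCLike.re (Xᴴ * X).trace := by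
  rw [← inner_euclideanVec, ← inner_self_eq_norm_sq (𝕜 := 𝕜)]

lemma norm_euclideanVec_unitary_mul [DecidableEq m] {U : Matrix m m 𝕜}
    (hU : U ∈ unitaryGroup m 𝕜) (X : Matrix m n 𝕜) :
    ‖euclideanVec (U * X)‖ = ‖euclideanVec X‖ := by
  refine (sq_eq_sq₀ (norm_nonneg _) (norm_nonneg _)).mp ?_
  rw [norm_euclideanVec_sq, norm_euclideanVec_sq, conjTranspose_mul, Matrix.mul_assoc,
    ← Matrix.mul_assoc Uᴴ, ← star_eq_conjTranspose, mem_unitaryGroup_iff'.mp hU, Matrix.one_mul]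

lemma re_trace_mul_conjTranspose_mul_le [DecidableEq n] (X Y : Matrix n n 𝕜) {W : Matrix n n 𝕜}
    (hW : W ∈ unitaryGroup n 𝕜) :
    RCLike.re (X * Yᴴ * W).trace ≤ ‖euclideanVec X‖ * ‖euclideanVec Y‖ := by
  rw [trace_mul_cycle, trace_mul_comm, ← inner_euclideanVec, mul_comm,
    ← norm_euclideanVec_unitary_mul hW X]
  exact re_inner_le_norm _ _

lemma re_trace_sub_mul_le [DecidableEq n] (A B : Matrix n n 𝕜) {W : Matrix n n 𝕜}
    (hW : W ∈ unitaryGroup n 𝕜) :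
    RCLike.re ((A * Aᴴ - B * Bᴴ) * W).trace ≤
      ‖euclideanVec (A - B)‖ * ‖euclideanVec (A + B)‖ := by
  have hsplit : ((A * Aᴴ - B * Bᴴ) * W).trace + ((A * Aᴴ - B * Bᴴ) * W).trace =
      ((A - B) * (A + B)ᴴ * W).trace + ((A + B) * (A - B)ᴴ * W).trace := by
    rw [← trace_add, ← trace_add, conjTranspose_add, conjTranspose_sub]
    congr 1
    noncomm_ring
  have h₁ := re_trace_mul_conjTranspose_mul_le (A - B) (A + B) hW
  have h₂ := re_trace_mul_conjTranspose_mul_le (A + B) (A - B) hW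
  have hre := congrArg RCLike.re hsplit
  rw [map_add, map_add] at hre
  linarith

end HilbertSchmidt

section Polar

variable [Fintype n] [DecidableEq n]

lemma exists_unitary_eq_mul_diagonal_sqrt {N : Matrix n n 𝕜} {μ : n → ℝ}
    (hN : Nᴴ * N = diagonal (RCLike.ofReal ∘ μ)) :
    ∃ U ∈ unitaryGroup n 𝕜, N = U * diagonal (RCLike.ofReal ∘ Real.sqrt ∘ μ) := by
  -- The columns `c i` of `N` are orthogonal with `‖c i‖² = μ i`; the columns of `U` are the
  -- normalised nonzero ones, extended to an orthonormal basis.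
  let c : n → EuclideanSpace 𝕜 n := fun i => WithLp.toLp 2 (Nᵀ i)
  have hc : ∀ i j, inner 𝕜 (c i) (c j) = if i = j then (μ i : 𝕜) else 0 := fun i j => by
    calc inner 𝕜 (c i) (c j) = (Nᴴ * N) i j := by
          rw [EuclideanSpace.inner_toLp_toLp, dotProduct_comm]; rfl
      _ = _ := by rw [hN, diagonal_apply, Function.comp_apply]
  have hnorm : ∀ i, ‖c i‖ ^ 2 = μ i := fun i => by
    rw [← inner_self_eq_norm_sq (𝕜 := 𝕜), hc, if_pos rfl, RCLike.ofReal_re]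
  have hμ : ∀ i, 0 ≤ μ i := fun i => hnorm i ▸ sq_nonneg _
  let f : n → EuclideanSpace 𝕜 n := fun i => ((√(μ i))⁻¹ : 𝕜) • c i
  have hf : Orthonormal 𝕜 ({i | μ i ≠ 0}.domRestrict f) := by
    refine ⟨fun i => ?_, fun i j hij => ?_⟩
    · have hpos : 0 < √(μ i) := Real.sqrt_pos.mpr ((hμ i).lt_of_ne' i.2)
      rw [Set.domRestrict_apply, norm_smul, norm_inv, RCLike.norm_ofReal, abs_of_pos hpos,
        ← Real.sqrt_sq (norm_nonneg (c i)), hnorm, inv_mul_cancel₀ hpos.ne']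
    · simp only [Set.domRestrict_apply, f, inner_smul_left, inner_smul_right, hc,
        if_neg (Subtype.coe_ne_coe.mpr hij), mul_zero]
  obtain ⟨b, hb⟩ := hf.exists_orthonormalBasis_extension_of_card_eq (by simp)
  refine ⟨(EuclideanSpace.basisFun n 𝕜).toBasis.toMatrix b,
    (EuclideanSpace.basisFun n 𝕜).toMatrix_orthonormalBasis_mem_unitary b, ?_⟩
  ext j i
  simp only [mul_diagonal, Module.Basis.toMatrix_apply, OrthonormalBasis.coe_toBasis_repr_apply,
    EuclideanSpace.basisFun_repr, Function.comp_apply]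
  by_cases hi : μ i = 0
  · have hci : c i = 0 := by rw [← norm_eq_zero, ← sq_eq_zero_iff (M₀ := ℝ), hnorm, hi]
    have hNji : N j i = c i j := rfl
    rw [hNji, hci, hi]
    simp
  · have hsqrt : (√(μ i) : 𝕜) ≠ 0 :=
      RCLike.ofReal_ne_zero.mpr (Real.sqrt_ne_zero'.mpr ((hμ i).lt_of_ne' hi))
    rw [hb i hi]
    change N j i = ((√(μ i))⁻¹ : 𝕜) * N j i * √(μ i)
    field_simp

lemma exists_unitary_eq_mul_sqrt (M : Matrix n n 𝕜) :
    ∃ U ∈ unitaryGroup n 𝕜, M = U * (posSemidef_conjTranspose_mul_self M).sqrt := by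
  set hH := (posSemidef_conjTranspose_mul_self M).1
  set V : Matrix n n 𝕜 := (hH.eigenvectorUnitary : Matrix n n 𝕜)
  have hVV : star V * V = 1 := Unitary.coe_star_mul_self _
  have hVV' : V * star V = 1 := Unitary.coe_mul_star_self _
  have hdiag : (M * V)ᴴ * (M * V) = diagonal (RCLike.ofReal ∘ hH.eigenvalues) := by
    rw [← hH.conjStarAlgAut_star_eigenvectorUnitary, Unitary.conjStarAlgAut_star_apply,
      conjTranspose_mul, ← star_eq_conjTranspose]
    noncomm_ring
  obtain ⟨U, hU, hMV⟩ := exists_unitary_eq_mul_diagonal_sqrt hdiag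
  refine ⟨U * star V, mul_mem hU (Unitary.star_mem hH.eigenvectorUnitary.2), ?_⟩
  calc M = M * V * star V := by rw [Matrix.mul_assoc, hVV', Matrix.mul_one]
    _ = U * star V * (V * diagonal (RCLike.ofReal ∘ Real.sqrt ∘ hH.eigenvalues) * star V) := by
      rw [hMV]
      simp only [Matrix.mul_assoc]
      rw [← Matrix.mul_assoc (star V) V, hVV, Matrix.one_mul]
    _ = _ := rfl

end Polar

end Matrix

open Matrix in
lemma exists_unitary_traceNorm_eq_re_trace_mul {n : Type*} [Fintype n] [DecidableEq n]
    (X : Matrix n n ℂ) : ∃ W ∈ unitaryGroup n ℂ, traceNorm X = (X * W).trace.re := by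
  obtain ⟨U, hU, hXU⟩ := exists_unitary_eq_mul_sqrt X
  refine ⟨star U, Unitary.star_mem hU, ?_⟩
  conv_rhs => rw [hXU, trace_mul_cycle, mem_unitaryGroup_iff'.mp hU, Matrix.one_mul]
  rfl

open Matrix in
/-- Fuchs–van de Graaf upper bound: `‖ρ − σ‖₁ ≤ 2√(1 − F(ρ,σ)²)` for density matrices. -/
theorem stmt10 {d : Type*} [Fintype d] [DecidableEq d]
    (ρ σ : Matrix d d ℂ)
    (hρ : ρ.PosSemidef) (hρ1 : ρ.trace = 1)
    (hσ : σ.PosSemidef) (hσ1 : σ.trace = 1) :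
    traceNorm (ρ - σ) ≤ 2 * Real.sqrt (1 - fidelity ρ σ ^ 2) := by
  obtain ⟨V, hV, hF⟩ := exists_unitary_traceNorm_eq_re_trace_mul (hρ.sqrt * hσ.sqrt)
  obtain ⟨W, hW, hT⟩ := exists_unitary_traceNorm_eq_re_trace_mul (ρ - σ)
  set A := hρ.sqrt
  set B := hσ.sqrt * V
  have hA : A * Aᴴ = ρ := by rw [hρ.conjTranspose_sqrt, hρ.sqrt_mul_sqrt]
  have hB : B * Bᴴ = σ := by
    rw [conjTranspose_mul, hσ.conjTranspose_sqrt, Matrix.mul_assoc, ← Matrix.mul_assoc V,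
      ← star_eq_conjTranspose, mem_unitaryGroup_iff.mp hV, Matrix.one_mul, hσ.sqrt_mul_sqrt]
  have hnorm : ∀ X : Matrix d d ℂ, (X * Xᴴ).trace = 1 → ‖euclideanVec X‖ = 1 := fun X hX => by
    rw [← pow_eq_one_iff_of_nonneg (norm_nonneg _) two_ne_zero, norm_euclideanVec_sq,
      trace_mul_comm, hX]
    rfl
  have hfid : fidelity ρ σ = RCLike.re (inner ℂ (euclideanVec A) (euclideanVec B)) := by
    rw [fidelity, matSqrt, matSqrt, dif_pos hρ, dif_pos hσ, hF, inner_euclideanVec,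
      hρ.conjTranspose_sqrt, Matrix.mul_assoc]
    rfl
  calc traceNorm (ρ - σ) = RCLike.re ((A * Aᴴ - B * Bᴴ) * W).trace := by rw [hT, hA, hB]; rfl
    _ ≤ ‖euclideanVec (A - B)‖ * ‖euclideanVec (A + B)‖ := re_trace_sub_mul_le A B hW
    _ = 2 * √(1 - fidelity ρ σ ^ 2) := by
      rw [euclideanVec_sub, euclideanVec_add, hfid,
        norm_sub_mul_norm_add_of_norm_eq_one (𝕜 := ℂ) (hnorm A (hA ▸ hρ1)) (hnorm B (hB ▸ hσ1))]
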